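/- arXiv:2307.07087 — 2 statements merged into one kernel-verified Lean document; each statement's English description precedes it below -/
import Mathlib

section
/- Let F be a finite field with q elements, let m ≥ 1, let d ≥ 1 be an integer with d ≤ q, and let ε ∈ (0, 1] satisfy (d − 1)/q ≤ ε/2. Let C_in : F → (Fin N_in → {0,1}) be a map such that for all distinct a ≠ b ∈ F, hammingDist(C_in(a), C_in(b)) ≥ (1/2 − ε/2)·N_in. For a polynomial p in m variables over F of total degree at most d − 1, define its concatenated encoding Enc(p) : F^m × Fin N_in → {0,1} by Enc(p)(v, t) = C_in(p(v))_t. Then for all distinct polynomials p₁ ≠ p₂ in m variables over F, each of total degree at most d − 1, hammingDist(Enc(p₁), Enc(p₂)) ≥ (1/2 − ε)·q^m·N_in. -/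
/-!
Two distinct polynomials of total degree `< d` differ, by Schwartz–Zippel, on at least
`(1 - (d - 1)/q) q^m ≥ (1 - ε/2) q^m` points of `F^m`. Each such point contributes at least
`(1/2 - ε/2) N_in` disagreements of the inner code, and
`(1 - ε/2)(1/2 - ε/2) ≥ 1/2 - ε`.
-/

open Finset MvPolynomial

theorem hammingDist_uncurry {ι κ β : Type*} [Fintype ι] [Fintype κ] [DecidableEq β]
    (f g : ι → κ → β) :
    hammingDist (fun i : ι × κ => f i.1 i.2) (fun i => g i.1 i.2) =
      ∑ i, hammingDist (f i) (g i) := by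
  simp only [hammingDist, card_filter, Fintype.sum_prod_type]

theorem mul_le_hammingDist_concat {ι κ α β : Type*} [Fintype ι] [Fintype κ]
    [DecidableEq α] [DecidableEq β] {C : α → κ → β} {δ : ℝ}
    (hC : ∀ a b, a ≠ b → δ ≤ hammingDist (C a) (C b)) (x y : ι → α) :
    hammingDist x y * δ ≤
      hammingDist (fun i : ι × κ => C (x i.1) i.2) (fun i => C (y i.1) i.2) := by
  rw [hammingDist_uncurry (fun i => C (x i)) (fun i => C (y i)), Nat.cast_sum, hammingDist,
    ← sum_filter_of_ne (p := fun i => x i ≠ y i)]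
  · rw [← nsmul_eq_mul, ← sum_const]
    exact sum_le_sum fun i hi => hC _ _ (mem_filter.mp hi).2
  · intro i _ hi hxy
    simp [hxy] at hi

theorem MvPolynomial.card_eval_eq_zero_le {R : Type*} [CommRing R] [IsDomain R]
    [Fintype R] [DecidableEq R] {n : ℕ} {p : MvPolynomial (Fin n) R} (hp : p ≠ 0) :
    (#{x : Fin n → R | eval x p = 0} : ℝ) ≤
      p.totalDegree / Fintype.card R * (Fintype.card R : ℝ) ^ n := by
  have hR : (0 : ℚ≥0) < Fintype.card R := by exact_mod_cast Fintype.card_pos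
  have h := schwartz_zippel_totalDegree hp univ
  rw [Fintype.piFinset_univ, card_univ, div_le_iff₀ (by positivity)] at h
  have h' := (NNRat.cast_le (K := ℝ)).mpr h
  push_cast at h'
  exact h'

theorem MvPolynomial.one_sub_totalDegree_div_mul_le_hammingDist_eval {R : Type*} [CommRing R]
    [IsDomain R] [Fintype R] [DecidableEq R] {n : ℕ} {p₁ p₂ : MvPolynomial (Fin n) R}
    (hne : p₁ ≠ p₂) :
    (1 - (p₁ - p₂).totalDegree / Fintype.card R) * (Fintype.card R : ℝ) ^ n ≤
      hammingDist (fun x : Fin n → R => eval x p₁) (fun x => eval x p₂) := by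
  have hsplit := card_filter_add_card_filter_not (s := univ)
    (fun x : Fin n → R => eval x (p₁ - p₂) = 0)
  rw [card_univ, Fintype.card_fun, Fintype.card_fin] at hsplit
  have hzeros := card_eval_eq_zero_le (sub_ne_zero.mpr hne)
  simp only [map_sub, sub_eq_zero] at hsplit hzeros
  rw [hammingDist]
  have := congrArg (Nat.cast (R := ℝ)) hsplit
  push_cast at this
  linarith

theorem rm_concat_distance_general {F : Type*} [Field F] [Fintype F]
    {m d N_in : ℕ} (hd : 1 ≤ d)
    {ε : ℝ} (hε0 : 0 < ε) (hε1 : ε ≤ 1)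
    (hdε : ((d : ℝ) - 1) / (Fintype.card F : ℝ) ≤ ε / 2)
    (C_in : F → Fin N_in → Bool)
    (hin : ∀ a b : F, a ≠ b →
      ((1 : ℝ) / 2 - ε / 2) * N_in ≤ (hammingDist (C_in a) (C_in b) : ℝ))
    (p₁ p₂ : MvPolynomial (Fin m) F) (hne : p₁ ≠ p₂)
    (h₁ : p₁.totalDegree ≤ d - 1) (h₂ : p₂.totalDegree ≤ d - 1) :
    ((1 : ℝ) / 2 - ε) * (Fintype.card F : ℝ) ^ m * N_in ≤
      (hammingDist
        (fun vt : (Fin m → F) × Fin N_in => C_in (MvPolynomial.eval vt.1 p₁) vt.2)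
        (fun vt : (Fin m → F) × Fin N_in => C_in (MvPolynomial.eval vt.1 p₂) vt.2) : ℝ) := by
  classical
  have hdeg : ((p₁ - p₂).totalDegree : ℝ) ≤ d - 1 := by
    have := (totalDegree_sub p₁ p₂).trans (max_le h₁ h₂)
    rw [← Nat.cast_one, ← Nat.cast_sub hd]
    exact_mod_cast this
  have hdeg_div : ((p₁ - p₂).totalDegree : ℝ) / Fintype.card F ≤ ε / 2 :=
    (div_le_div_of_nonneg_right hdeg (Nat.cast_nonneg _)).trans hdε
  have houter := one_sub_totalDegree_div_mul_le_hammingDist_eval hne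
  have hinner_nonneg : (0 : ℝ) ≤ (1 / 2 - ε / 2) * N_in :=
    mul_nonneg (by linarith) (Nat.cast_nonneg _)
  calc ((1 : ℝ) / 2 - ε) * (Fintype.card F : ℝ) ^ m * N_in
      ≤ (1 - ε / 2) * (Fintype.card F : ℝ) ^ m * ((1 / 2 - ε / 2) * N_in) := by
        -- the difference is ε (1 + ε) / 4
        have hcoeff : 1 / 2 - ε ≤ (1 - ε / 2) * (1 / 2 - ε / 2) := by nlinarith
        linear_combination mul_le_mul_of_nonneg_right hcoeff
          (by positivity : (0 : ℝ) ≤ (Fintype.card F : ℝ) ^ m * N_in)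
    _ ≤ hammingDist (fun v : Fin m → F => eval v p₁) (fun v => eval v p₂) *
          ((1 / 2 - ε / 2) * N_in) := by
        gcongr
        exact le_trans (by gcongr) houter
    _ ≤ _ := mul_le_hammingDist_concat hin _ _

/-- **Distance of the concatenated Reed–Muller code.**
Let `F` be a finite field with `q` elements, `m ≥ 1`, `1 ≤ d ≤ q`, `ε ∈ (0,1]`
with `(d−1)/q ≤ ε/2`, and let `C_in : F → {0,1}^{N_in}` have distance at least
`(1/2 − ε/2)·N_in`. Encoding an `m`-variate polynomial `p` of total degree
`≤ d − 1` by `Enc(p)(v,t) = C_in (p(v)) t`, any two distinct such polynomials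
have encodings at Hamming distance at least `(1/2 − ε)·q^m·N_in`. -/
theorem rm_concat_distance {F : Type*} [Field F] [Fintype F] [DecidableEq F]
    {m d N_in : ℕ} (hm : 1 ≤ m) (hd : 1 ≤ d) (hdq : d ≤ Fintype.card F)
    {ε : ℝ} (hε0 : 0 < ε) (hε1 : ε ≤ 1)
    (hdε : ((d : ℝ) - 1) / (Fintype.card F : ℝ) ≤ ε / 2)
    (C_in : F → Fin N_in → Bool)
    (hin : ∀ a b : F, a ≠ b →
      ((1 : ℝ) / 2 - ε / 2) * N_in ≤ (hammingDist (C_in a) (C_in b) : ℝ))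
    (p₁ p₂ : MvPolynomial (Fin m) F) (hne : p₁ ≠ p₂)
    (h₁ : p₁.totalDegree ≤ d - 1) (h₂ : p₂.totalDegree ≤ d - 1) :
    ((1 : ℝ) / 2 - ε) * (Fintype.card F : ℝ) ^ m * N_in ≤
      (hammingDist
        (fun vt : (Fin m → F) × Fin N_in => C_in (MvPolynomial.eval vt.1 p₁) vt.2)
        (fun vt : (Fin m → F) × Fin N_in => C_in (MvPolynomial.eval vt.1 p₂) vt.2) : ℝ) :=
  rm_concat_distance_general hd hε0 hε1 hdε C_in hin p₁ p₂ hne h₁ h₂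
end

section
/- Fix a type α, a target value q* ∈ α, an arbitrary initial value q⊥ ∈ α, and a finite sequence (q̂_b, ĉ_b) for b = 1,…,ℓ with q̂_b ∈ α and ĉ_b ≥ 0 real. Let (q_b, c_b), the signed confidences c^±_b, and the signed increments σ_b be defined by the confidence update process. Then for every b ∈ {1,…,ℓ} it holds that c^±_b − c^±_{b−1} ≥ σ_b, and consequently c^±_ℓ ≥ σ_1 + σ_2 + ⋯ + σ_ℓ. -/
open Classical

/-- The confidence update process: starting from `(q⊥, 0)`, process the pairs
`(q̂ b, ĉ b)` for `b = 1, 2, …`.  If the new guess agrees with the current one,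
add its confidence; otherwise subtract it, and if the confidence would become
negative, switch to the new guess with the negated confidence. -/
noncomputable def confProc {α : Type*} (qbot : α) (qhat : ℕ → α) (chat : ℕ → ℝ) :
    ℕ → α × ℝ
  | 0 => (qbot, 0)
  | b + 1 =>
    let s := confProc qbot qhat chat b
    if qhat (b + 1) = s.1 then (s.1, s.2 + chat (b + 1))
    else if 0 ≤ s.2 - chat (b + 1) then (s.1, s.2 - chat (b + 1))
    else (qhat (b + 1), chat (b + 1) - s.2)

/-- The signed confidence `c^±_b`: the current confidence, signed by whether the
current guess equals the target `q*`. -/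
noncomputable def signedConf {α : Type*} (qstar qbot : α) (qhat : ℕ → α)
    (chat : ℕ → ℝ) (b : ℕ) : ℝ :=
  if (confProc qbot qhat chat b).1 = qstar then (confProc qbot qhat chat b).2
  else -(confProc qbot qhat chat b).2

/-- The signed increment `σ_b`: the incoming confidence `ĉ_b`, signed by whether
the incoming guess `q̂_b` equals the target `q*`. -/
noncomputable def signedInc {α : Type*} (qstar : α) (qhat : ℕ → α)
    (chat : ℕ → ℝ) (b : ℕ) : ℝ :=
  if qhat b = qstar then chat b else -chat b

lemma confProc_nonneg {α : Type*} (qbot : α) (qhat : ℕ → α) (chat : ℕ → ℝ)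
    (hc : ∀ b, 0 ≤ chat b) : ∀ b, 0 ≤ (confProc qbot qhat chat b).2 := by
  intro b
  induction b with
  | zero => simp [confProc]
  | succ n ih =>
    simp only [confProc]
    split_ifs with h1 h2
    · exact add_nonneg ih (hc _)
    · exact h2
    · show 0 ≤ chat (n + 1) - (confProc qbot qhat chat n).2
      linarith

lemma signedConf_step {α : Type*} (qstar qbot : α) (qhat : ℕ → α) (chat : ℕ → ℝ)
    (hc : ∀ b, 0 ≤ chat b) (b : ℕ) :
    signedInc qstar qhat chat (b + 1) ≤
      signedConf qstar qbot qhat chat (b + 1) - signedConf qstar qbot qhat chat b := by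
  have hnn := confProc_nonneg qbot qhat chat hc b
  have hch := hc (b + 1)
  simp only [signedInc, signedConf, confProc]
  split_ifs <;> simp_all <;> linarith

/-- **Signed confidences dominate signed increments.**
In the confidence update process with nonnegative incoming confidences, for every
step `b ∈ {1,…,ℓ}` we have `c^±_b − c^±_{b−1} ≥ σ_b`, and consequently
`c^±_ℓ ≥ σ_1 + ⋯ + σ_ℓ`. -/
theorem signedConf_ge_sum_signedInc {α : Type*} (qstar qbot : α) (ℓ : ℕ)
    (qhat : ℕ → α) (chat : ℕ → ℝ) (hc : ∀ b, 0 ≤ chat b) :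
    (∀ b ∈ Finset.Icc 1 ℓ,
      signedInc qstar qhat chat b ≤
        signedConf qstar qbot qhat chat b - signedConf qstar qbot qhat chat (b - 1)) ∧
    (∑ b ∈ Finset.Icc 1 ℓ, signedInc qstar qhat chat b) ≤
      signedConf qstar qbot qhat chat ℓ := by
  constructor
  · intro b hb
    simp only [Finset.mem_Icc] at hb
    obtain ⟨b, rfl⟩ := Nat.exists_eq_succ_of_ne_zero (by omega : b ≠ 0)
    simpa using signedConf_step qstar qbot qhat chat hc b
  · induction ℓ with
    | zero => simp [signedConf, confProc]
    | succ n ih =>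
      rw [Finset.sum_Icc_succ_top (by omega)]
      have := signedConf_step qstar qbot qhat chat hc n
      linarith
end
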